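/- The vector field R is the Reeb vector field of the weighted form β₀ in the following sense: for every z ∈ ℂⁿ \ {0}, β₀(z)(R(z)) = 1, and for every v ∈ ℂⁿ, (Dβ₀(z)[R(z)])(v) = (Dβ₀(z)[v])(R(z)); that is, the contraction of the exterior derivative of β₀ with R vanishes identically. -/

import Mathlib

open Complex

/-- The weighted quadratic form `Q(z) = ∑_k a_k |z_k|²` on `ℂⁿ`. -/
noncomputable def Qw (n : ℕ) (a : Fin n → ℝ) (z : Fin n → ℂ) : ℝ :=
  ∑ k, a k * ‖z k‖ ^ 2

/-- The weighted `1`-form `β₀(z)(v) = Q(z)⁻¹·∑_j Im(conj(z_j)·v_j)`. -/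
noncomputable def beta0 (n : ℕ) (a : Fin n → ℝ) (z v : Fin n → ℂ) : ℝ :=
  (Qw n a z)⁻¹ * ∑ j, ((starRingEnd ℂ) (z j) * v j).im

/-- The weighted rotation vector field `R(z)_j = i·a_j·z_j`. -/
noncomputable def ReebW (n : ℕ) (a : Fin n → ℝ) (z : Fin n → ℂ) : Fin n → ℂ :=
  fun j => Complex.I * ((a j : ℝ) : ℂ) * z j

/-! Write `β₀(y)(v) = σ(y, v) / σ(y, R y)` with `σ(u, v) = ∑ Im(conj uⱼ vⱼ)`, which is antisymmetric,
and `R` linear and `σ`-symmetric: `σ(u, R v) = ∑ aⱼ Re(conj uⱼ vⱼ) = σ(v, R u)`. Then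
`Q = σ(·, R ·)` has derivative `2 σ(·, R z)` at `z`, which vanishes in the direction `R z`, and the
quotient rule turns both sides of the identity into `σ(R z, v) / Q(z)`. -/

section NormalizedLiouville

variable {E : Type*} [NormedAddCommGroup E] [NormedSpace ℝ E]

theorem fderiv_inv_mul_apply {Q f : E → ℝ} {Q' f' : E →L[ℝ] ℝ} {z : E}
    (hQ : HasFDerivAt Q Q' z) (hf : HasFDerivAt f f' z) (hQz : Q z ≠ 0) (u : E) :
    fderiv ℝ (fun y => (Q y)⁻¹ * f y) z u = (Q z)⁻¹ * f' u - (Q z ^ 2)⁻¹ * Q' u * f z := by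
  have h : HasFDerivAt (fun y => (Q y)⁻¹ * f y) _ z :=
    ((hasDerivAt_inv hQz).comp_hasFDerivAt z hQ).mul hf
  rw [h.fderiv]
  simp only [add_apply, smul_apply, smul_eq_mul, Function.comp_apply]
  ring

theorem hasFDerivAt_apply_apply_self (σ : E →L[ℝ] E →L[ℝ] ℝ) (R : E →L[ℝ] E) (z : E) :
    HasFDerivAt (fun y => σ y (R y)) (σ.flip (R z) + (σ z).comp R) z :=
  (σ.hasFDerivAt_of_bilinear (hasFDerivAt_id z) R.hasFDerivAt).congr_fderiv (by ext; simp [add_comm])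

variable (σ : E →L[ℝ] E →L[ℝ] ℝ) (R : E →L[ℝ] E)

noncomputable def normalizedLiouville (y v : E) : ℝ := (σ y (R y))⁻¹ * σ y v

theorem normalizedLiouville_apply_self {z : E} (hz : σ z (R z) ≠ 0) :
    normalizedLiouville σ R z (R z) = 1 :=
  inv_mul_cancel₀ hz

theorem fderiv_normalizedLiouville_apply_comm (hσ : ∀ u v, σ u v = -σ v u)
    (hR : ∀ u v, σ u (R v) = σ v (R u)) {z : E} (hz : σ z (R z) ≠ 0) (v : E) :
    fderiv ℝ (fun y => normalizedLiouville σ R y v) z (R z)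
      = fderiv ℝ (fun y => normalizedLiouville σ R y (R z)) z v := by
  have hQ := hasFDerivAt_apply_apply_self σ R z
  simp only [normalizedLiouville]
  rw [fderiv_inv_mul_apply (f := fun y => σ y v) hQ (σ.flip v).hasFDerivAt hz,
    fderiv_inv_mul_apply (f := fun y => σ y (R z)) hQ (σ.flip (R z)).hasFDerivAt hz]
  simp only [add_apply, ContinuousLinearMap.flip_apply, ContinuousLinearMap.coe_comp,
    Function.comp_apply]
  have hRR : σ (R z) (R z) = 0 := by linarith [hσ (R z) (R z)]
  rw [hR z (R z), hRR, hR z v, hσ (R z) v]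
  field_simp
  ring

end NormalizedLiouville

open ComplexConjugate

noncomputable def imInner (n : ℕ) : (Fin n → ℂ) →L[ℝ] (Fin n → ℂ) →L[ℝ] ℝ :=
  IsBilinearMap.toContinuousBilinearMap (f := fun u v => ∑ j, (conj (u j) * v j).im)
    { add_left := fun _ _ _ => by simp [add_mul, Finset.sum_add_distrib]
      smul_left := fun _ _ _ => by simp [Finset.mul_sum, mul_add, mul_assoc]
      add_right := fun _ _ _ => by simp [mul_add, Finset.sum_add_distrib]
      smul_right := fun _ _ _ => by simp [Finset.mul_sum, mul_add, mul_left_comm] }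

@[simp]
theorem imInner_apply (n : ℕ) (u v : Fin n → ℂ) :
    imInner n u v = ∑ j, (conj (u j) * v j).im :=
  rfl

theorem imInner_antisymm (n : ℕ) (u v : Fin n → ℂ) : imInner n u v = -imInner n v u := by
  simp only [imInner_apply, ← Finset.sum_neg_distrib]
  refine Finset.sum_congr rfl fun j _ => ?_
  simp only [mul_im, conj_re, conj_im]
  ring

noncomputable def reebCLM (n : ℕ) (a : Fin n → ℝ) : (Fin n → ℂ) →L[ℝ] (Fin n → ℂ) :=
  ContinuousLinearMap.pi fun j => (I * (a j : ℂ)) • ContinuousLinearMap.proj j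

theorem coe_reebCLM (n : ℕ) (a : Fin n → ℝ) : ⇑(reebCLM n a) = ReebW n a := by
  ext z j
  simp [reebCLM, ReebW]

theorem imInner_reebCLM_comm (n : ℕ) (a : Fin n → ℝ) (u v : Fin n → ℂ) :
    imInner n u (reebCLM n a v) = imInner n v (reebCLM n a u) := by
  simp only [imInner_apply, coe_reebCLM, ReebW]
  refine Finset.sum_congr rfl fun j _ => ?_
  simp only [mul_im, mul_re, conj_re, conj_im, I_re, I_im, ofReal_re, ofReal_im]
  ring

theorem imInner_reebCLM_self (n : ℕ) (a : Fin n → ℝ) (z : Fin n → ℂ) :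
    imInner n z (reebCLM n a z) = Qw n a z := by
  simp only [imInner_apply, coe_reebCLM, ReebW, Qw]
  refine Finset.sum_congr rfl fun j _ => ?_
  simp only [mul_im, mul_re, conj_re, conj_im, I_re, I_im, ofReal_re, ofReal_im, Complex.sq_norm,
    normSq_apply]
  ring

theorem beta0_eq_normalizedLiouville (n : ℕ) (a : Fin n → ℝ) :
    beta0 n a = normalizedLiouville (imInner n) (reebCLM n a) := by
  ext z v
  rw [normalizedLiouville, imInner_reebCLM_self, imInner_apply, beta0]

theorem Qw_pos {n : ℕ} {a : Fin n → ℝ} (ha : ∀ j, 0 < a j) {z : Fin n → ℂ} (hz : z ≠ 0) :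
    0 < Qw n a z := by
  obtain ⟨k, hk⟩ := Function.ne_iff.mp hz
  exact Finset.sum_pos' (fun j _ => mul_nonneg (ha j).le (sq_nonneg _))
    ⟨k, Finset.mem_univ k, mul_pos (ha k) (pow_pos (norm_pos_iff.mpr hk) 2)⟩

theorem ReebW_is_reeb_of_beta0_general (n : ℕ) (a : Fin n → ℝ) (ha : ∀ j, 0 < a j)
    (z : Fin n → ℂ) (hz : z ≠ 0) :
    beta0 n a z (ReebW n a z) = 1 ∧
    ∀ v : Fin n → ℂ,
      fderiv ℝ (fun y => beta0 n a y v) z (ReebW n a z)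
        = fderiv ℝ (fun y => beta0 n a y (ReebW n a z)) z v := by
  have hQ : imInner n z (reebCLM n a z) ≠ 0 := by
    rw [imInner_reebCLM_self]
    exact (Qw_pos ha hz).ne'
  rw [beta0_eq_normalizedLiouville, ← coe_reebCLM]
  exact ⟨normalizedLiouville_apply_self _ _ hQ,
    fderiv_normalizedLiouville_apply_comm _ _ (imInner_antisymm n) (imInner_reebCLM_comm n a) hQ⟩

/-- `R` is the Reeb vector field of `β₀`: for every `z ∈ ℂⁿ \ {0}`, `β₀(z)(R(z)) = 1`, and
for every `v ∈ ℂⁿ`, `(Dβ₀(z)[R(z)])(v) = (Dβ₀(z)[v])(R(z))`; that is, the contraction of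
the exterior derivative of `β₀` with `R` vanishes identically. -/
theorem ReebW_is_reeb_of_beta0 (n : ℕ) (hn : 1 ≤ n) (a : Fin n → ℝ) (ha : ∀ j, 0 < a j)
    (z : Fin n → ℂ) (hz : z ≠ 0) :
    beta0 n a z (ReebW n a z) = 1 ∧
    ∀ v : Fin n → ℂ,
      fderiv ℝ (fun y => beta0 n a y v) z (ReebW n a z)
        = fderiv ℝ (fun y => beta0 n a y (ReebW n a z)) z v :=
  ReebW_is_reeb_of_beta0_general n a ha z hz
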